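/- arXiv:0810.4733 — 6 statements merged into one kernel-verified Lean document; each statement's English description precedes it below -/
import Mathlib

section
/- Suppose U ∈ A is invertible and D(U) = φ₂(U). If α ∈ A is such that 1 + α is invertible and D(α) = φ₁(α + 1) · φ₂(α), then there exists n ∈ ker D such that 1 − Un is invertible and α = Un(1 − Un)⁻¹. (Indeed n = U⁻¹ − U⁻¹(α+1)⁻¹ works, since then α = (1 − Un)⁻¹ − 1 = Un(1 − Un)⁻¹.) -/
section

variable {R A B : Type*} [CommSemiring R] [Semiring A] [Algebra R A] [Ring B] [Algebra R B]

def IsTwistedDerivation (φ₁ φ₂ : A →ₐ[R] B) (D : A →ₗ[R] B) : Prop :=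
  ∀ x y : A, D (x * y) = φ₁ x * D y + D x * φ₂ y

namespace IsTwistedDerivation

variable {φ₁ φ₂ : A →ₐ[R] B} {D : A →ₗ[R] B}

theorem map_one_eq_zero (hD : IsTwistedDerivation φ₁ φ₂ D) : D 1 = 0 := by
  simpa using hD 1 1

theorem map_of_mul_eq_one (hD : IsTwistedDerivation φ₁ φ₂ D) {a b : A} (hab : a * b = 1)
    (hba : b * a = 1) : D b = -(φ₁ b * D a * φ₂ b) := by
  have h : φ₁ b * D a + D b * φ₂ a = 0 := by rw [← hD, hba, hD.map_one_eq_zero]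
  rw [eq_neg_iff_add_eq_zero, ← mul_one (D b), ← map_one φ₂, ← hab, map_mul, ← mul_assoc,
    ← add_mul, add_comm, h, zero_mul]

theorem map_of_mul_eq_one_of_map_eq (hD : IsTwistedDerivation φ₁ φ₂ D) {a b : A} (c : A)
    (hab : a * b = 1) (hba : b * a = 1) (ha : D a = φ₁ c * φ₂ a) : D b = -φ₁ (b * c) := by
  rw [hD.map_of_mul_eq_one hab hba, ha, ← mul_assoc, mul_assoc, ← map_mul φ₂, hab, map_one,
    mul_one, map_mul]

end IsTwistedDerivation

end

/-- Suppose `U ∈ A` is invertible and `D U = φ₂ U`.  If `α ∈ A` is such that `1 + α` is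
invertible and `D α = φ₁ (α + 1) * φ₂ α`, then there exists `n ∈ ker D` such that
`1 - U*n` is invertible and `α = U*n*(1 - U*n)⁻¹`. -/
theorem stmt3 (A B : Type*) [Ring A] [Algebra ℂ A] [Ring B] [Algebra ℂ B]
    (φ₁ φ₂ : A →ₐ[ℂ] B) (D : A →ₗ[ℂ] B)
    (hD : ∀ x y : A, D (x * y) = φ₁ x * D y + D x * φ₂ y)
    (U Ui : A) (hU1 : U * Ui = 1) (hU2 : Ui * U = 1) (hDU : D U = φ₂ U)
    (α w : A) (h1 : (1 + α) * w = 1) (h2 : w * (1 + α) = 1)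
    (hα : D α = φ₁ (α + 1) * φ₂ α) :
    ∃ n v : A, D n = 0 ∧ (1 - U * n) * v = 1 ∧ v * (1 - U * n) = 1 ∧ α = U * n * v := by
  have hD' : IsTwistedDerivation φ₁ φ₂ D := hD
  have hDUi : D Ui = -φ₁ Ui := by
    simpa using hD'.map_of_mul_eq_one_of_map_eq 1 hU1 hU2 (by simpa using hDU)
  -- `Ui * w` inverts `(1 + α) * U`, which satisfies `D x = φ₁ (1 + α) * φ₂ x` just as `U`
  -- satisfies it with `1`; so both inverses have derivative `-φ₁ Ui` and `n = Ui - Ui * w ∈ ker D`.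
  have hDUiw : D (Ui * w) = -φ₁ Ui := by
    have hDαU : D ((1 + α) * U) = φ₁ (1 + α) * φ₂ ((1 + α) * U) := by
      rw [hD, map_add D, hD'.map_one_eq_zero, zero_add, hα, hDU, add_comm α, mul_assoc, ← mul_add,
        ← map_mul, ← map_add, add_mul, one_mul]
    rw [hD'.map_of_mul_eq_one_of_map_eq (1 + α)
      (by rw [mul_assoc, ← mul_assoc U, hU1, one_mul, h1])
      (by rw [mul_assoc, ← mul_assoc w, h2, one_mul, hU2]) hDαU, mul_assoc, h2, mul_one]
  have hUn : U * (Ui - Ui * w) = 1 - w := by rw [mul_sub, ← mul_assoc, hU1, one_mul]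
  have hsub : 1 - U * (Ui - Ui * w) = w := by rw [hUn, sub_sub_cancel]
  refine ⟨Ui - Ui * w, 1 + α, ?_, by rw [hsub, h2], by rw [hsub, h1], ?_⟩
  · rw [map_sub, hDUi, hDUiw, sub_self]
  · rw [hUn, sub_mul, one_mul, h2, add_sub_cancel_left]
end

section
/- Suppose U ∈ A is invertible and D(U) = φ₂(U). If n ∈ ker D is such that 1 − Un is invertible, then D(Un(1−Un)⁻¹) = φ₁(Un(1−Un)⁻¹ + 1) · φ₂(Un(1−Un)⁻¹). -/
section TwistedDerivation

variable {A B F G : Type*} [Ring A] [Ring B] [FunLike F A B] [RingHomClass F A B]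
  [FunLike G A B]

theorem map_one_eq_zero_of_twisted_leibniz {φ₁ φ₂ : F} {D : G}
    (hD : ∀ x y : A, D (x * y) = φ₁ x * D y + D x * φ₂ y) : D 1 = 0 := by
  simpa using hD 1 1

theorem map_inverse_eq_of_twisted_leibniz {φ₁ φ₂ : F} {D : G}
    (hD : ∀ x y : A, D (x * y) = φ₁ x * D y + D x * φ₂ y) {a v : A}
    (h1 : a * v = 1) (h2 : v * a = 1) : D v = -(φ₁ v * D a * φ₂ v) := by
  have hprod : φ₁ a * D v = -(D a * φ₂ v) := by
    rw [← add_eq_zero_iff_eq_neg, ← hD, h1, map_one_eq_zero_of_twisted_leibniz hD]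
  calc D v = φ₁ (v * a) * D v := by rw [h2, map_one, one_mul]
    _ = φ₁ v * (φ₁ a * D v) := by rw [map_mul, mul_assoc]
    _ = -(φ₁ v * D a * φ₂ v) := by rw [hprod, mul_neg, mul_assoc]

theorem map_mul_inverse_one_sub_of_twisted_leibniz [AddMonoidHomClass G A B] {φ₁ φ₂ : F} {D : G}
    (hD : ∀ x y : A, D (x * y) = φ₁ x * D y + D x * φ₂ y) {w v : A} (hw : D w = φ₂ w)
    (h1 : (1 - w) * v = 1) (h2 : v * (1 - w) = 1) :
    D (w * v) = φ₁ (w * v + 1) * φ₂ (w * v) := by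
  have hv : D v = φ₁ v * φ₂ w * φ₂ v := by
    rw [map_inverse_eq_of_twisted_leibniz hD h1 h2, map_sub,
      map_one_eq_zero_of_twisted_leibniz hD, hw]
    noncomm_ring
  rw [hD, hv, hw, map_add, map_mul, map_mul, map_one]
  noncomm_ring

end TwistedDerivation

theorem stmt4_general (A B : Type*) [Ring A] [Algebra ℂ A] [Ring B] [Algebra ℂ B]
    (φ₁ φ₂ : A →ₐ[ℂ] B) (D : A →ₗ[ℂ] B)
    (hD : ∀ x y : A, D (x * y) = φ₁ x * D y + D x * φ₂ y)
    (U : A) (hDU : D U = φ₂ U)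
    (n v : A) (hn : D n = 0) (h1 : (1 - U * n) * v = 1) (h2 : v * (1 - U * n) = 1) :
    D (U * n * v) = φ₁ (U * n * v + 1) * φ₂ (U * n * v) := by
  have hUn : D (U * n) = φ₂ (U * n) := by
    rw [hD, hn, hDU, map_mul, mul_zero, zero_add]
  exact map_mul_inverse_one_sub_of_twisted_leibniz hD hUn h1 h2

/-- Suppose `U ∈ A` is invertible and `D U = φ₂ U`.  If `n ∈ ker D` is such that `1 - U*n`
is invertible (with two-sided inverse `v`), then
`D (U*n*(1-U*n)⁻¹) = φ₁ (U*n*(1-U*n)⁻¹ + 1) * φ₂ (U*n*(1-U*n)⁻¹)`. -/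
theorem stmt4 (A B : Type*) [Ring A] [Algebra ℂ A] [Ring B] [Algebra ℂ B]
    (φ₁ φ₂ : A →ₐ[ℂ] B) (D : A →ₗ[ℂ] B)
    (hD : ∀ x y : A, D (x * y) = φ₁ x * D y + D x * φ₂ y)
    (U Ui : A) (hU1 : U * Ui = 1) (hU2 : Ui * U = 1) (hDU : D U = φ₂ U)
    (n v : A) (hn : D n = 0) (h1 : (1 - U * n) * v = 1) (h2 : v * (1 - U * n) = 1) :
    D (U * n * v) = φ₁ (U * n * v + 1) * φ₂ (U * n * v) :=
  stmt4_general A B φ₁ φ₂ D hD U hDU n v hn h1 h2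
end

section
/- For every p ≥ 0 and all f, g ∈ A, the iterated comultiplication satisfies the generalized Leibniz rule Δ⁽ᵖ⁾(fg) = Σ_{k=0}^{p} (Δ⁽ᵏ⁾(f) ⊗ 1^{⊗(p−k)}) · (1^{⊗k} ⊗ Δ⁽ᵖ⁻ᵏ⁾(g)), an identity in the (p+1)-fold tensor power A^{⊗(p+1)} (under the standard identifications of iterated tensor products of algebras). -/
open scoped TensorProduct

universe u

/-- A bundled unital associative algebra over `ℂ`. -/
structure BAlg : Type (u + 1) where
  carrier : Type u
  [ringInst : Ring carrier]
  [algInst : Algebra ℂ carrier]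

attribute [instance] BAlg.ringInst BAlg.algInst

instance : CoeSort BAlg.{u} (Type u) := ⟨BAlg.carrier⟩

/-- The tower of tensor powers `TP A p = A^{⊗(p+1)}`, built by right-nested binary tensor
products: `TP A 0 = A` and `TP A (p+1) = A ⊗ TP A p`, each with its canonical algebra
structure. -/
noncomputable def TP (A : Type u) [Ring A] [Algebra ℂ A] : ℕ → BAlg.{u}
  | 0 => BAlg.mk A
  | (p + 1) => BAlg.mk (A ⊗[ℂ] (TP A p : Type u))

variable {A : Type u} [Ring A] [Algebra ℂ A]

/-- `Δ ⊗ id^{⊗p}` acting on the left-most tensor factor of `A^{⊗(p+1)}` (under the standard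
identifications of iterated tensor products). -/
noncomputable def leftD (Δ : A →ₗ[ℂ] A ⊗[ℂ] A) :
    ∀ p : ℕ, (TP A p : Type u) →ₗ[ℂ] (TP A (p + 1) : Type u)
  | 0 => Δ
  | (p + 1) =>
      (TensorProduct.assoc ℂ A A (TP A p : Type u)).toLinearMap.comp
        (TensorProduct.map Δ (LinearMap.id : (TP A p : Type u) →ₗ[ℂ] (TP A p : Type u)))

/-- The iterated comultiplication `Δ⁽ᵖ⁾ : A → A^{⊗(p+1)}`, defined by `Δ⁽⁰⁾ = id` and
`Δ⁽ᵖ⁺¹⁾ = (Δ ⊗ id^{⊗p}) ∘ Δ⁽ᵖ⁾`. -/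
noncomputable def iterD (Δ : A →ₗ[ℂ] A ⊗[ℂ] A) : ∀ p : ℕ, A →ₗ[ℂ] (TP A p : Type u)
  | 0 => LinearMap.id
  | (p + 1) => (leftD Δ p).comp (iterD Δ p)

/-- Appending a tensor factor `1` on the right: `A^{⊗(p+1)} → A^{⊗(p+2)}`,
`x ↦ x ⊗ 1`. -/
noncomputable def appRight : ∀ p : ℕ, (TP A p : Type u) →ₐ[ℂ] (TP A (p + 1) : Type u)
  | 0 => (Algebra.TensorProduct.includeLeft : A →ₐ[ℂ] A ⊗[ℂ] A)
  | (p + 1) => Algebra.TensorProduct.map (AlgHom.id ℂ A) (appRight p)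

/-- `x ↦ x ⊗ 1^{⊗ j} : A^{⊗(k+1)} → A^{⊗(k+j+1)}`. -/
noncomputable def padRight (k : ℕ) : ∀ j : ℕ, (TP A k : Type u) →ₐ[ℂ] (TP A (k + j) : Type u)
  | 0 => AlgHom.id ℂ _
  | (j + 1) => (appRight (k + j)).comp (padRight k j)

/-- `y ↦ 1^{⊗ k} ⊗ y : A^{⊗(j+1)} → A^{⊗(j+k+1)}`. -/
noncomputable def padLeft (j : ℕ) : ∀ k : ℕ, (TP A j : Type u) →ₐ[ℂ] (TP A (j + k) : Type u)
  | 0 => AlgHom.id ℂ _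
  | (k + 1) => (Algebra.TensorProduct.includeRight).comp (padLeft j k)


/-!
`leftD Δ p = Δ ⊗ id` obeys the same twisted Leibniz rule as `Δ`:
`leftD (x * y) = x' * leftD y + leftD x * (1 ⊗ y)`, where `x'` is `x` with a `1` inserted in the
second tensor slot. Apply `leftD` to the summands at level `p`. For the `k`-th summand
`(Δ⁽ᵏ⁾f ⊗ 1) * (1^{⊗k} ⊗ Δ⁽ᵖ⁻ᵏ⁾g)` the second term of the rule is the `(k+1)`-st summand at level
`p + 1`. The first term vanishes for `k ≥ 1`, because `leftD (1 ⊗ y) = Δ 1 ⊗ y` and `Δ 1 = 0`;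
for `k = 0` it is the new summand `(f ⊗ 1) * Δ⁽ᵖ⁺¹⁾g`.
-/

-- The instances on `TP A (p + 1)` are those of `A ⊗ TP A p`; unfolding `TP` lets them be found.
attribute [reducible] TP

section TwistedLeibniz

variable {R A₁ A₂ C : Type*} [CommSemiring R] [Semiring A₁] [Algebra R A₁] [Semiring A₂]
  [Algebra R A₂] [Semiring C] [Algebra R C]

theorem LinearMap.map_one_eq_zero_of_leibniz [IsLeftCancelAdd A₂] (D : A₁ →ₗ[R] A₂)
    (φ ψ : A₁ →ₐ[R] A₂)
    (hD : ∀ a b, D (a * b) = φ a * D b + D a * ψ b) : D 1 = 0 := by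
  have h := hD 1 1
  rw [mul_one, map_one φ, map_one ψ, one_mul, mul_one] at h
  exact left_eq_add.mp h

theorem LinearMap.rTensor_mul_of_leibniz (D : A₁ →ₗ[R] A₂) (φ ψ : A₁ →ₐ[R] A₂)
    (hD : ∀ a b, D (a * b) = φ a * D b + D a * ψ b) (x y : A₁ ⊗[R] C) :
    D.rTensor C (x * y) =
      Algebra.TensorProduct.map φ (AlgHom.id R C) x * D.rTensor C y +
        D.rTensor C x * Algebra.TensorProduct.map ψ (AlgHom.id R C) y := by
  induction x using TensorProduct.induction_on with
  | zero => simp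
  | add x x' hx hx' => simp only [add_mul, map_add, hx, hx']; abel
  | tmul a c =>
    induction y using TensorProduct.induction_on with
    | zero => simp
    | add y y' hy hy' => simp only [mul_add, map_add, hy, hy']; abel
    | tmul b d =>
      simp only [Algebra.TensorProduct.tmul_mul_tmul, LinearMap.rTensor_tmul,
        Algebra.TensorProduct.map_tmul, AlgHom.id_apply, hD, TensorProduct.add_tmul]

end TwistedLeibniz

noncomputable def castTP : {m n : ℕ} → m = n → ((TP A m : Type u) ≃ₐ[ℂ] (TP A n : Type u))
  | _, _, rfl => AlgEquiv.refl

@[simp] theorem castTP_rfl {n : ℕ} (h : n = n) (x : (TP A n : Type u)) : castTP h x = x := rfl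

theorem castTP_castTP {l m n : ℕ} (h : l = m) (h' : m = n) (x : (TP A l : Type u)) :
    castTP h' (castTP h x) = castTP (h.trans h') x := by
  subst h h'; rfl

theorem cast_eq_castTP {m n : ℕ} (h : m = n) (x : (TP A m : Type u)) :
    cast (congrArg (fun n => (TP A n : Type u)) h) x = castTP h x := by
  subst h; rfl

theorem map_castTP (F : ∀ n : ℕ, (TP A n).carrier → (TP A (n + 1)).carrier) {m n : ℕ}
    (h : m = n) (x : (TP A m : Type u)) :
    F n (castTP h x) = castTP (congrArg (· + 1) h) (F m x) := by
  subst h; rfl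

-- `x₀ ⊗ x₁ ⊗ ⋯ ⊗ xₚ ↦ x₀ ⊗ 1 ⊗ x₁ ⊗ ⋯ ⊗ xₚ`
noncomputable def insertOne : ∀ p : ℕ, (TP A p : Type u) →ₐ[ℂ] (TP A (p + 1) : Type u)
  | 0 => Algebra.TensorProduct.includeLeft
  | (p + 1) => (Algebra.TensorProduct.assoc ℂ ℂ ℂ A A (TP A p : Type u)).toAlgHom.comp
      (Algebra.TensorProduct.map Algebra.TensorProduct.includeLeft (AlgHom.id ℂ _))

theorem leftD_succ_apply (Δ : A →ₗ[ℂ] A ⊗[ℂ] A) (p : ℕ) (x : (TP A (p + 1) : Type u)) :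
    leftD Δ (p + 1) x = Algebra.TensorProduct.assoc ℂ ℂ ℂ A A (TP A p : Type u) (Δ.rTensor _ x) :=
  rfl

def IsDerivationComul (Δ : A →ₗ[ℂ] A ⊗[ℂ] A) : Prop :=
  ∀ a b : A, Δ (a * b) = (a ⊗ₜ[ℂ] (1 : A)) * Δ b + Δ a * ((1 : A) ⊗ₜ[ℂ] b)

theorem IsDerivationComul.map_one {Δ : A →ₗ[ℂ] A ⊗[ℂ] A} (hΔ : IsDerivationComul Δ) :
    Δ 1 = 0 :=
  Δ.map_one_eq_zero_of_leibniz Algebra.TensorProduct.includeLeft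
    Algebra.TensorProduct.includeRight hΔ

theorem leftD_mul {Δ : A →ₗ[ℂ] A ⊗[ℂ] A} (hΔ : IsDerivationComul Δ) (p : ℕ) (x y : (TP A p : Type u)) :
    leftD Δ p (x * y) = insertOne p x * leftD Δ p y +
      leftD Δ p x * Algebra.TensorProduct.includeRight y := by
  cases p with
  | zero => exact hΔ x y
  | succ p =>
    have hR : (Algebra.TensorProduct.assoc ℂ ℂ ℂ A A (TP A p : Type u)).toAlgHom.comp
        (Algebra.TensorProduct.map Algebra.TensorProduct.includeRight (AlgHom.id ℂ _)) =
        Algebra.TensorProduct.includeRight :=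
      Algebra.TensorProduct.ext' fun _ _ => rfl
    rw [leftD_succ_apply, leftD_succ_apply, leftD_succ_apply, Δ.rTensor_mul_of_leibniz
      Algebra.TensorProduct.includeLeft Algebra.TensorProduct.includeRight hΔ, map_add, map_mul,
      map_mul, ← hR]
    rfl

theorem appRight_leftD (Δ : A →ₗ[ℂ] A ⊗[ℂ] A) (n : ℕ) (y : (TP A n : Type u)) :
    appRight (n + 1) (leftD Δ n y) = leftD Δ (n + 1) (appRight n y) := by
  cases n with
  | zero =>
    show appRight 1 (Δ y) = leftD Δ 1 (y ⊗ₜ[ℂ] (1 : A))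
    rw [leftD_succ_apply, LinearMap.rTensor_tmul]
    induction (Δ y) using TensorProduct.induction_on with
    | zero => simp
    | add s t hs ht => rw [map_add, hs, ht, TensorProduct.add_tmul, map_add]
    | tmul b c => rfl
  | succ m =>
    induction y using TensorProduct.induction_on with
    | zero => simp
    | add y y' hy hy' => rw [map_add, map_add, hy, hy', map_add, map_add]
    | tmul a w =>
      show _ = leftD Δ (m + 2) (a ⊗ₜ[ℂ] appRight m w)
      rw [leftD_succ_apply, leftD_succ_apply, LinearMap.rTensor_tmul, LinearMap.rTensor_tmul]
      induction (Δ a) using TensorProduct.induction_on with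
      | zero => simp
      | add s t hs ht =>
        rw [TensorProduct.add_tmul, map_add, map_add, hs, ht, TensorProduct.add_tmul, map_add]
      | tmul b c => rfl

theorem leftD_padRight (Δ : A →ₗ[ℂ] A ⊗[ℂ] A) (m j : ℕ) (z : (TP A m : Type u)) :
    leftD Δ (m + j) (padRight m j z) =
      castTP (Nat.succ_add m j) (padRight (m + 1) j (leftD Δ m z)) := by
  induction j with
  | zero => rfl
  | succ j ih =>
    show leftD Δ (m + j + 1) (appRight (m + j) (padRight m j z)) =
      castTP _ (appRight (m + 1 + j) (padRight (m + 1) j (leftD Δ m z)))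
    rw [← appRight_leftD, ih, map_castTP (fun n => appRight n)]

theorem insertOne_appRight (n : ℕ) (z : (TP A n : Type u)) :
    insertOne (n + 1) (appRight n z) = appRight (n + 1) (insertOne n z) := by
  cases n with
  | zero => rfl
  | succ m =>
    induction z using TensorProduct.induction_on with
    | zero => simp
    | add z z' hz hz' => rw [map_add, map_add, hz, hz', map_add, map_add]
    | tmul a w => rfl

theorem insertOne_padRight_zero (j : ℕ) (a : A) :
    insertOne (0 + j) (padRight 0 j a) = padRight 0 (j + 1) a := by
  induction j with
  | zero => rfl
  | succ j ih =>
    show insertOne (0 + j + 1) (appRight (0 + j) (padRight 0 j a)) =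
      appRight (0 + j + 1) (padRight 0 (j + 1) a)
    rw [insertOne_appRight, ih]

theorem leftD_includeRight (Δ : A →ₗ[ℂ] A ⊗[ℂ] A) (hΔ₁ : Δ 1 = 0) (n : ℕ)
    (w : (TP A n : Type u)) : leftD Δ (n + 1) (Algebra.TensorProduct.includeRight w) = 0 := by
  show leftD Δ (n + 1) ((1 : A) ⊗ₜ[ℂ] w) = 0
  rw [leftD_succ_apply, LinearMap.rTensor_tmul, hΔ₁, TensorProduct.zero_tmul, map_zero]

section Leibniz

variable (Δ : A →ₗ[ℂ] A ⊗[ℂ] A) (f g : A)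

noncomputable def leibnizTerm (k j : ℕ) : (TP A (k + j) : Type u) :=
  padRight k j (iterD Δ k f) * castTP (Nat.add_comm j k) (padLeft j k (iterD Δ j g))

noncomputable def leibnizTermAt (p : ℕ) (kj : ℕ × ℕ) : (TP A p : Type u) :=
  if h : kj.1 + kj.2 = p then castTP h (leibnizTerm Δ f g kj.1 kj.2) else 0

variable {Δ}

theorem leftD_leibnizTerm (hΔ : IsDerivationComul Δ) (k j : ℕ) :
    leftD Δ (k + j) (leibnizTerm Δ f g k j) =
      insertOne (k + j) (padRight k j (iterD Δ k f)) *
          leftD Δ (k + j) (castTP (Nat.add_comm j k) (padLeft j k (iterD Δ j g))) +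
        castTP (Nat.succ_add k j) (leibnizTerm Δ f g (k + 1) j) := by
  rw [leibnizTerm, leftD_mul hΔ, leftD_padRight,
    map_castTP (fun n => Algebra.TensorProduct.includeRight), leibnizTerm, map_mul, castTP_castTP]
  rfl

theorem leftD_leibnizTermAt (hΔ : IsDerivationComul Δ) {p k j : ℕ} (h : k + j = p) :
    leftD Δ p (leibnizTermAt Δ f g p (k, j)) =
      leibnizTermAt Δ f g (p + 1) (k + 1, j) +
        if k = 0 then leibnizTermAt Δ f g (p + 1) (0, j + 1) else 0 := by
  subst h
  simp only [leibnizTermAt, dif_pos rfl, castTP_rfl, leftD_leibnizTerm f g hΔ,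
    dif_pos (Nat.succ_add k j)]
  cases k with
  | zero =>
    rw [insertOne_padRight_zero, map_castTP (fun n => leftD Δ n), if_pos rfl, dif_pos (by omega)]
    exact add_comm _ _
  | succ k =>
    have hvanish : leftD Δ (j + (k + 1)) (padLeft j (k + 1) (iterD Δ j g)) = 0 :=
      leftD_includeRight Δ hΔ.map_one (j + k) _
    rw [map_castTP (fun n => leftD Δ n), hvanish, map_zero, mul_zero, zero_add,
      if_neg k.succ_ne_zero, add_zero]

open Finset in
theorem iterD_mul (hΔ : IsDerivationComul Δ) (p : ℕ) :
    iterD Δ p (f * g) = ∑ kj ∈ antidiagonal p, leibnizTermAt Δ f g p kj := by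
  induction p with
  | zero => rw [Nat.antidiagonal_zero, sum_singleton]; rfl
  | succ p ih =>
    have hfirst : ∑ kj ∈ antidiagonal p,
        (if kj.1 = 0 then leibnizTermAt Δ f g (p + 1) (0, kj.2 + 1) else 0) =
          leibnizTermAt Δ f g (p + 1) (0, p + 1) := by
      rw [sum_eq_single (0, p)]
      · rfl
      · rintro ⟨k, j⟩ hkj hne
        rw [HasAntidiagonal.mem_antidiagonal] at hkj
        exact if_neg fun hk => hne (by simp_all)
      · simp
    calc iterD Δ (p + 1) (f * g) = leftD Δ p (iterD Δ p (f * g)) := rfl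
      _ = ∑ kj ∈ antidiagonal p, (leibnizTermAt Δ f g (p + 1) (kj.1 + 1, kj.2) +
            if kj.1 = 0 then leibnizTermAt Δ f g (p + 1) (0, kj.2 + 1) else 0) := by
        rw [ih, map_sum]
        exact sum_congr rfl fun kj hkj =>
          leftD_leibnizTermAt f g hΔ (HasAntidiagonal.mem_antidiagonal.mp hkj)
      _ = ∑ kj ∈ antidiagonal (p + 1), leibnizTermAt Δ f g (p + 1) kj := by
        rw [sum_add_distrib, hfirst, Nat.sum_antidiagonal_succ]
        exact add_comm _ _

end Leibniz

/-- Generalized Leibniz rule: for a derivation-comultiplication `Δ` on `A`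
(`Δ (a b) = (a ⊗ 1) Δ b + Δ a (1 ⊗ b)`), for every `p ≥ 0` and all `f, g ∈ A`,
`Δ⁽ᵖ⁾(f g) = Σ_{k=0}^{p} (Δ⁽ᵏ⁾ f ⊗ 1^{⊗(p−k)}) · (1^{⊗k} ⊗ Δ⁽ᵖ⁻ᵏ⁾ g)`
in `A^{⊗(p+1)}`. -/
theorem stmt5 (Δ : A →ₗ[ℂ] A ⊗[ℂ] A)
    (hΔ : ∀ a b : A, Δ (a * b) = (a ⊗ₜ[ℂ] (1 : A)) * Δ b + Δ a * ((1 : A) ⊗ₜ[ℂ] b))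
    (p : ℕ) (f g : A) :
    iterD Δ p (f * g) =
      ∑ kj ∈ (Finset.HasAntidiagonal.antidiagonal p).attach,
        cast (congrArg (fun n => (TP A n : Type u)) (Finset.HasAntidiagonal.mem_antidiagonal.mp kj.2))
            (padRight kj.1.1 kj.1.2 (iterD Δ kj.1.1 f)) *
          cast (congrArg (fun n => (TP A n : Type u))
              ((Nat.add_comm kj.1.2 kj.1.1).trans (Finset.HasAntidiagonal.mem_antidiagonal.mp kj.2)))
            (padLeft kj.1.2 kj.1.1 (iterD Δ kj.1.2 g)) := by
  rw [iterD_mul f g hΔ, ← Finset.sum_attach]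
  refine Finset.sum_congr rfl fun ⟨⟨k, j⟩, hkj⟩ _ => ?_
  dsimp only
  rw [leibnizTermAt, dif_pos (Finset.HasAntidiagonal.mem_antidiagonal.mp hkj), leibnizTerm,
    map_mul, castTP_castTP, cast_eq_castTP, cast_eq_castTP]
end

section
/- Let A be a unital C*-algebra, T ∈ A, and ε > 0 such that Im T ≥ ε·1 (i.e. Im T − ε·1 is a positive element). Then T is invertible, ‖T⁻¹‖ ≤ ε⁻¹, and Im(T⁻¹) ≤ −(ε + ε⁻¹‖T‖²)⁻¹ · 1. -/
/-! With `b = Im T`, expanding `0 ≤ (T - iε)⋆(T - iε)` gives `T⋆T ≥ 2εb - ε² ≥ ε²`; applied to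
`-T⋆`, whose imaginary part is again `b`, it also gives `TT⋆ ≥ ε²`. Hence `T` is invertible and
`‖T⁻¹‖² = ‖(T⋆T)⁻¹‖ ≤ ε⁻²`. Finally `Im T⁻¹ = -T⁻¹ b T⁻¹⋆ ≤ -ε (T⋆T)⁻¹`, and
`ε² ≤ T⋆T ≤ ε² + ‖T‖²` gives `(T⋆T)⁻¹ ≥ (ε² + ‖T‖²)⁻¹`, where `ε / (ε² + ‖T‖²)` is the stated
constant. -/

open ComplexStarModule Complex

theorem isUnit_of_isUnit_mul_of_isUnit_mul {M : Type*} [Monoid M] {a b c : M}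
    (hba : IsUnit (b * a)) (hac : IsUnit (a * c)) : IsUnit a := by
  obtain ⟨u, hu⟩ := hba
  obtain ⟨v, hv⟩ := hac
  have hl : (↑u⁻¹ * b) * a = 1 := by rw [mul_assoc, ← hu, Units.inv_mul]
  have hr : a * (c * ↑v⁻¹) = 1 := by rw [← mul_assoc, ← hv, Units.mul_inv]
  exact ⟨⟨a, _, hr, left_inv_eq_right_inv hl hr ▸ hl⟩, rfl⟩

section ComplexStarModule

variable {A : Type*} [AddCommGroup A] [Module ℂ A] [StarAddMonoid A] [StarModule ℂ A]

theorem coe_imaginaryPart_eq (x : A) : (ℑ x : A) = (2 * I)⁻¹ • (x - star x) := by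
  rw [imaginaryPart_apply_coe, ← Complex.coe_smul, smul_smul]
  congr 1
  simp

theorem imaginaryPart_star (x : A) : ℑ (star x) = -ℑ x := by
  ext
  simp [imaginaryPart_apply_coe, ← smul_neg]

end ComplexStarModule

theorem Ring.inverse_algebraMap {R A : Type*} [Field R] [Semiring A] [Algebra R A] (r : R) :
    Ring.inverse (algebraMap R A r) = algebraMap R A r⁻¹ := by
  rcases eq_or_ne r 0 with rfl | hr
  · simp
  · rw [← mul_one (Ring.inverse _), Ring.inverse_mul_eq_iff_eq_mul _ _ _ ((IsUnit.mk0 r hr).map _),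
      ← map_mul, mul_inv_cancel₀ hr, map_one]

theorem Ring.inverse_star_mul_self {R : Type*} [Semiring R] [StarRing R] {x : R} (hx : IsUnit x) :
    Ring.inverse (star x * x) = Ring.inverse x * star (Ring.inverse x) := by
  obtain ⟨u, rfl⟩ := hx
  rw [← Units.coe_star, ← Units.val_mul, Ring.inverse_unit, Ring.inverse_unit, mul_inv_rev,
    Units.val_mul, Units.coe_star_inv]

section StarAlgebra

variable {A : Type*} [Ring A] [StarRing A] [Algebra ℂ A] [StarModule ℂ A]

theorem star_mul_self_sub_I_smul_one (x : A) (r : ℝ) :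
    star (x - (r * I) • 1) * (x - (r * I) • 1) =
      star x * x - (2 * r) • (ℑ x : A) + algebraMap ℝ A (r ^ 2) := by
  rw [imaginaryPart_apply_coe, Algebra.algebraMap_eq_smul_one]
  simp only [star_sub, star_smul, star_one, sub_mul, mul_sub, smul_mul_assoc, mul_smul_comm,
    one_mul, mul_one, Complex.star_def, map_mul, conj_ofReal, conj_I, ← Complex.coe_smul,
    smul_smul]
  linear_combination (norm := module) (-(r : ℂ) ^ 2 * I_sq) • (1 : A)

theorem coe_imaginaryPart_inverse (x : A) :
    (ℑ (Ring.inverse x) : A) = -(Ring.inverse x * ℑ x * star (Ring.inverse x)) := by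
  by_cases hx : IsUnit x
  swap
  · simp [Ring.inverse_non_unit x hx]
  obtain ⟨u, rfl⟩ := hx
  have h : (↑u⁻¹ : A) - star ↑u⁻¹ = -(↑u⁻¹ * ((u : A) - star ↑u) * star ↑u⁻¹) := by
    rw [mul_sub, sub_mul, Units.inv_mul, one_mul, mul_assoc, ← star_mul, Units.inv_mul, star_one,
      mul_one, neg_sub]
  rw [Ring.inverse_unit, coe_imaginaryPart_eq, coe_imaginaryPart_eq, h, smul_neg, mul_smul_comm,
    smul_mul_assoc]

end StarAlgebra

section CStarAlgebra

variable {A : Type*} [CStarAlgebra A] [PartialOrder A] [StarOrderedRing A] {x : A} {ε : ℝ}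

theorem algebraMap_sq_le_star_mul_self (hε : 0 ≤ ε) (h : algebraMap ℝ A ε ≤ ℑ x) :
    algebraMap ℝ A (ε ^ 2) ≤ star x * x := by
  have hsq := star_mul_self_nonneg (x - (ε * I) • 1)
  rw [star_mul_self_sub_I_smul_one] at hsq
  calc algebraMap ℝ A (ε ^ 2) = (2 * ε) • algebraMap ℝ A ε - algebraMap ℝ A (ε ^ 2) := by
        simp only [Algebra.algebraMap_eq_smul_one, smul_smul]; module
    _ ≤ (2 * ε) • (ℑ x : A) - algebraMap ℝ A (ε ^ 2) := by gcongr
    _ ≤ star x * x := sub_nonneg.mp (by convert hsq using 1; abel)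

theorem algebraMap_sq_le_mul_star_self (hε : 0 ≤ ε) (h : algebraMap ℝ A ε ≤ ℑ x) :
    algebraMap ℝ A (ε ^ 2) ≤ x * star x := by
  simpa using algebraMap_sq_le_star_mul_self (x := -star x) hε (by simpa [imaginaryPart_star])

theorem isUnit_of_algebraMap_le_imaginaryPart (hε : 0 < ε) (h : algebraMap ℝ A ε ≤ ℑ x) :
    IsUnit x :=
  isUnit_of_isUnit_mul_of_isUnit_mul
    (CStarAlgebra.isUnit_of_le _ (algebraMap_sq_le_star_mul_self hε.le h)
      (isStrictlyPositive_algebraMap (by positivity)))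
    (CStarAlgebra.isUnit_of_le _ (algebraMap_sq_le_mul_star_self hε.le h)
      (isStrictlyPositive_algebraMap (by positivity)))

theorem norm_inverse_le_of_algebraMap_le_imaginaryPart (hε : 0 < ε)
    (h : algebraMap ℝ A ε ≤ ℑ x) : ‖Ring.inverse x‖ ≤ ε⁻¹ := by
  have hle : Ring.inverse x * star (Ring.inverse x) ≤ algebraMap ℝ A ((ε ^ 2)⁻¹) := by
    rw [← Ring.inverse_star_mul_self (isUnit_of_algebraMap_le_imaginaryPart hε h),
      ← Ring.inverse_algebraMap]
    exact CStarAlgebra.ringInverse_le_ringInverse (algebraMap_sq_le_star_mul_self hε.le h)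
      (isStrictlyPositive_algebraMap (by positivity))
  have hnorm := (CStarAlgebra.norm_le_iff_le_algebraMap _ (by positivity)
    (mul_star_self_nonneg _)).mpr hle
  rw [CStarRing.norm_self_mul_star, ← sq, ← inv_pow] at hnorm
  exact (pow_le_pow_iff_left₀ (norm_nonneg _) (by positivity) two_ne_zero).mp hnorm

theorem imaginaryPart_inverse_le_of_algebraMap_le_imaginaryPart (hε : 0 < ε)
    (h : algebraMap ℝ A ε ≤ ℑ x) :
    (ℑ (Ring.inverse x) : A) ≤ algebraMap ℝ A (-(ε + ε⁻¹ * ‖x‖ ^ 2)⁻¹) := by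
  have hx := isUnit_of_algebraMap_le_imaginaryPart hε h
  have hbound : star x * x ≤ algebraMap ℝ A (ε ^ 2 + ‖x‖ ^ 2) :=
    CStarAlgebra.star_mul_le_algebraMap_norm_sq.trans
      (algebraMap_mono A (le_add_of_nonneg_left (sq_nonneg ε)))
  have hpos : IsStrictlyPositive (star x * x) :=
    .of_le (isStrictlyPositive_algebraMap (by positivity)) (algebraMap_sq_le_star_mul_self hε.le h)
  have hinv : algebraMap ℝ A (ε ^ 2 + ‖x‖ ^ 2)⁻¹ ≤ Ring.inverse x * star (Ring.inverse x) := by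
    rw [← Ring.inverse_star_mul_self hx, ← Ring.inverse_algebraMap]
    exact CStarAlgebra.ringInverse_le_ringInverse hbound hpos
  have hconj := star_left_conjugate_le_conjugate h (star (Ring.inverse x))
  rw [star_star] at hconj
  have hcoeff : (ε + ε⁻¹ * ‖x‖ ^ 2)⁻¹ = ε * (ε ^ 2 + ‖x‖ ^ 2)⁻¹ := by field_simp
  rw [coe_imaginaryPart_inverse, map_neg, neg_le_neg_iff, hcoeff, map_mul, ← Algebra.smul_def]
  calc ε • algebraMap ℝ A (ε ^ 2 + ‖x‖ ^ 2)⁻¹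
      ≤ ε • (Ring.inverse x * star (Ring.inverse x)) := by gcongr
    _ = Ring.inverse x * algebraMap ℝ A ε * star (Ring.inverse x) := by
        rw [Algebra.smul_def, ← mul_assoc, Algebra.commutes]
    _ ≤ Ring.inverse x * ℑ x * star (Ring.inverse x) := hconj

end CStarAlgebra

/-- In a unital C*-algebra `A`, if `Im T ≥ ε·1` for some `ε > 0`, then `T` is invertible,
`‖T⁻¹‖ ≤ ε⁻¹`, and `Im (T⁻¹) ≤ −(ε + ε⁻¹ ‖T‖²)⁻¹ · 1`.  Here `Im y = (y − y*)/(2i)`. -/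
theorem stmt11 (A : Type*) [NormedRing A] [StarRing A] [CStarRing A]
    [NormedAlgebra ℂ A] [CompleteSpace A] [StarModule ℂ A]
    [PartialOrder A] [StarOrderedRing A]
    (T : A) (ε : ℝ) (hε : 0 < ε)
    (h : ((ε : ℂ)) • (1 : A) ≤ (2 * Complex.I)⁻¹ • (T - star T)) :
    IsUnit T ∧ ‖Ring.inverse T‖ ≤ ε⁻¹ ∧
      (2 * Complex.I)⁻¹ • (Ring.inverse T - star (Ring.inverse T)) ≤
        ((-(ε + ε⁻¹ * ‖T‖ ^ 2)⁻¹ : ℝ) : ℂ) • (1 : A) := by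
  let _ : CStarAlgebra A := {}
  simp only [← coe_imaginaryPart_eq, ← Algebra.algebraMap_eq_smul_one] at h ⊢
  exact ⟨isUnit_of_algebraMap_le_imaginaryPart hε h,
    norm_inverse_le_of_algebraMap_le_imaginaryPart hε h,
    imaginaryPart_inverse_le_of_algebraMap_le_imaginaryPart hε h⟩
end

section
/- Let A be a unital C*-algebra and x ∈ A. Then ‖x‖ < 1 if and only if 1 − x is invertible and there exists ε > 0 such that 2·Re((1−x)⁻¹) ≥ (1+ε)·1, where Re y denotes the self-adjoint element (y + y*)/2 and the order is the standard order on self-adjoint elements of a C*-algebra. -/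
/-!
Put `u = 1 - x`. Conjugating by the invertible `u` turns `(1 + ε) ≤ u⁻¹ + (u⁻¹)*` into
`(1 + ε) u*u ≤ u + u*`, and `u + u* - u*u = 1 - x*x`, so the condition reads `ε u*u ≤ 1 - x*x`.
As `u*u` is strictly positive, such an `ε > 0` exists iff `1 - x*x` is strictly positive, that is,
iff the spectrum of `x*x` lies below `1`, i.e. `‖x‖² = ‖x*x‖ < 1`.
-/

lemma one_sub_add_star_one_sub_sub_star_mul_self {R : Type*} [Ring R] [StarRing R] (x : R) :
    (1 - x) + star (1 - x) - star (1 - x) * (1 - x) = 1 - star x * x := by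
  simp only [star_sub, star_one]
  noncomm_ring

section StarOrderedRing

variable {R : Type*} [Ring R] [StarRing R] [PartialOrder R] [StarOrderedRing R] [Algebra ℝ R]

lemma smul_one_le_inverse_add_star_iff {u : R} (hu : IsUnit u) (r : ℝ) :
    r • (1 : R) ≤ Ring.inverse u + star (Ring.inverse u) ↔ r • (star u * u) ≤ u + star u := by
  have hinv : Ring.inverse u * u = 1 := Ring.inverse_mul_cancel u hu
  have hconj : star u * (Ring.inverse u + star (Ring.inverse u) - r • 1) * u
      = u + star u - r • (star u * u) := by
    simp only [mul_sub, sub_mul, mul_add, add_mul, mul_assoc, hinv, mul_smul_comm, smul_mul_assoc,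
      mul_one, ← star_mul]
    simp [add_comm]
  rw [← sub_nonneg, ← hu.star_left_conjugate_nonneg_iff, hconj, sub_nonneg]

end StarOrderedRing

section CStarAlgebra

variable {A : Type*} [CStarAlgebra A] [PartialOrder A] [StarOrderedRing A]

lemma norm_lt_one_iff_isStrictlyPositive_one_sub {a : A} (ha : 0 ≤ a) :
    ‖a‖ < 1 ↔ IsStrictlyPositive (1 - a) := by
  nontriviality A
  have hspec : spectrum ℝ (1 - a) = (1 - ·) '' spectrum ℝ a := by
    rw [← map_one (algebraMap ℝ A), ← spectrum.singleton_sub_eq, Set.singleton_sub]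
  rw [StarOrderedRing.isStrictlyPositive_iff_spectrum_pos (R := ℝ) (1 - a), hspec,
    Set.forall_mem_image]
  constructor
  · intro h t ht
    have ht_le : t ≤ ‖a‖ := (Real.le_norm_self t).trans (spectrum.norm_le_norm_of_mem ht)
    linarith
  · intro h
    linarith [h (CStarAlgebra.norm_mem_spectrum_of_nonneg ha)]

lemma norm_lt_one_iff_isStrictlyPositive_one_sub_star_mul_self (x : A) :
    ‖x‖ < 1 ↔ IsStrictlyPositive (1 - star x * x) := by
  rw [← norm_lt_one_iff_isStrictlyPositive_one_sub (star_mul_self_nonneg x),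
    CStarRing.norm_star_mul_self, ← sq, sq_lt_one_iff₀ (norm_nonneg x)]

lemma exists_pos_smul_le_iff_isStrictlyPositive {a b : A} (ha : IsStrictlyPositive a) :
    (∃ ε : ℝ, 0 < ε ∧ ε • a ≤ b) ↔ IsStrictlyPositive b := by
  constructor
  · rintro ⟨ε, hε, hab⟩
    exact (ha.smul hε).of_le hab
  · intro hb
    obtain _ | _ := subsingleton_or_nontrivial A
    · exact ⟨1, one_pos, (Subsingleton.elim _ _).le⟩
    obtain ⟨r, hr, hrb⟩ := (CFC.exists_pos_algebraMap_le_iff hb.isSelfAdjoint).mpr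
      fun t ht ↦ hb.spectrum_pos ht
    refine ⟨r / (‖a‖ + 1), by positivity, ?_⟩
    calc (r / (‖a‖ + 1)) • a ≤ (r / (‖a‖ + 1)) • algebraMap ℝ A ‖a‖ :=
          smul_le_smul_of_nonneg_left ha.isSelfAdjoint.le_algebraMap_norm_self (by positivity)
      _ = algebraMap ℝ A (r / (‖a‖ + 1) * ‖a‖) := by rw [map_mul, Algebra.smul_def]
      _ ≤ algebraMap ℝ A r := by
          gcongr
          rw [div_mul_eq_mul_div, div_le_iff₀ (by positivity)]
          nlinarith [norm_nonneg a]
      _ ≤ b := hrb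

lemma exists_one_add_smul_le_inverse_add_star_iff {x : A} (hu : IsUnit (1 - x)) :
    (∃ ε : ℝ, 0 < ε ∧ (1 + ε) • (1 : A) ≤ Ring.inverse (1 - x) + star (Ring.inverse (1 - x))) ↔
      IsStrictlyPositive (1 - star x * x) := by
  have hpos : IsStrictlyPositive (star (1 - x) * (1 - x)) :=
    (hu.star.mul hu).isStrictlyPositive (star_mul_self_nonneg _)
  simp_rw [smul_one_le_inverse_add_star_iff hu, add_smul, one_smul, ← le_sub_iff_add_le',
    one_sub_add_star_one_sub_sub_star_mul_self]
  exact exists_pos_smul_le_iff_isStrictlyPositive hpos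

end CStarAlgebra

/-- In a unital C*-algebra `A`, `‖x‖ < 1` iff `1 − x` is invertible and
`2·Re((1−x)⁻¹) ≥ (1+ε)·1` for some `ε > 0`, where `Re y = (y + y*)/2`. -/
theorem stmt12 (A : Type*) [NormedRing A] [StarRing A] [CStarRing A]
    [NormedAlgebra ℂ A] [CompleteSpace A] [StarModule ℂ A]
    [PartialOrder A] [StarOrderedRing A] (x : A) :
    ‖x‖ < 1 ↔
      IsUnit (1 - x) ∧ ∃ ε : ℝ, 0 < ε ∧
        (((1 + ε : ℝ)) : ℂ) • (1 : A) ≤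
          (2 : ℂ) • ((2 : ℂ)⁻¹ •
            (Ring.inverse (1 - x) + star (Ring.inverse (1 - x)))) := by
  let : CStarAlgebra A := {}
  have two_smul_half_smul (z : A) : (2 : ℂ) • ((2 : ℂ)⁻¹ • z) = z := by
    rw [smul_smul, mul_inv_cancel₀ two_ne_zero, one_smul]
  simp only [Complex.coe_smul, two_smul_half_smul]
  constructor
  · intro hx
    have hu := isUnit_one_sub_of_norm_lt_one hx
    exact ⟨hu, (exists_one_add_smul_le_inverse_add_star_iff hu).mpr
      ((norm_lt_one_iff_isStrictlyPositive_one_sub_star_mul_self x).mp hx)⟩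
  · rintro ⟨hu, hε⟩
    exact (norm_lt_one_iff_isStrictlyPositive_one_sub_star_mul_self x).mpr
      ((exists_one_add_smul_le_inverse_add_star_iff hu).mp hε)
end

section
/- Let A be a unital complex Banach algebra and x ∈ A with ‖x‖ < 1. Then every z in the spectrum of (1−x)⁻¹ satisfies Re(z) ≥ 1/2; equivalently, if Re(z) < 1/2 then (1−x)⁻¹ − z·1 is invertible. -/
/-!
With `u = 1 - x`, the spectrum of `u⁻¹` consists of the inverses of the points of `σ u = 1 - σ x`,
which lie in the open disc `‖w - 1‖ < 1`. This disc is mapped by `w ↦ w⁻¹` into the half-plane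
`Re > 1/2`, since `|w - 1|² < 1` is exactly `|w|² < 2 Re w`.
-/

namespace Complex

theorem one_half_lt_re_inv_of_norm_one_sub_lt_one {w : ℂ} (hw : ‖1 - w‖ < 1) :
    1 / 2 < (w⁻¹).re := by
  have hsq : normSq (1 - w) < 1 := by
    rw [normSq_eq_norm_sq]
    nlinarith [norm_nonneg (1 - w)]
  have hlt : normSq w < 2 * w.re := by
    simp only [normSq_apply, sub_re, sub_im, one_re, one_im] at hsq ⊢
    nlinarith
  have hpos : 0 < normSq w := normSq_pos.mpr (by rintro rfl; simp at hw)
  rw [inv_re, lt_div_iff₀ hpos]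
  linarith

end Complex

section

variable {𝕜 A : Type*} [NontriviallyNormedField 𝕜] [NormedRing A] [NormedAlgebra 𝕜 A]
  [CompleteSpace A]

/-- Unlike `spectrum.norm_le_norm_of_mem`, this needs no `NormOneClass A`: factoring
`k - a = k • (1 - k⁻¹ • a)` never involves `‖1‖`. -/
theorem norm_le_norm_of_mem_spectrum {a : A} {k : 𝕜} (hk : k ∈ spectrum 𝕜 a) : ‖k‖ ≤ ‖a‖ := by
  by_contra! hlt
  have hk0 : k ≠ 0 := norm_pos_iff.mp ((norm_nonneg a).trans_lt hlt)
  have hsmall : ‖k⁻¹ • a‖ < 1 := by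
    rw [norm_smul, norm_inv, inv_mul_lt_one₀ ((norm_nonneg a).trans_lt hlt)]
    exact hlt
  apply spectrum.mem_iff.mp hk
  have hfactor : algebraMap 𝕜 A k - a = k • (1 - k⁻¹ • a) := by
    rw [smul_sub, smul_inv_smul₀ hk0, Algebra.algebraMap_eq_smul_one]
  rw [hfactor]
  exact (isUnit_one_sub_of_norm_lt_one hsmall).smul (Units.mk0 k hk0)

theorem norm_one_sub_le_of_mem_spectrum_one_sub {a : A} {w : 𝕜} (hw : w ∈ spectrum 𝕜 (1 - a)) :
    ‖1 - w‖ ≤ ‖a‖ := by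
  rw [← map_one (algebraMap 𝕜 A), ← spectrum.singleton_sub_eq] at hw
  obtain ⟨_, rfl, k, hk, rfl⟩ := hw
  simpa using norm_le_norm_of_mem_spectrum hk

end

/-- In a unital complex Banach algebra, if `‖x‖ < 1`, then every `z` in the spectrum of
`(1−x)⁻¹` satisfies `Re z ≥ 1/2`. -/
theorem stmt14 (A : Type*) [NormedRing A] [NormedAlgebra ℂ A] [CompleteSpace A]
    (x : A) (hx : ‖x‖ < 1) :
    ∀ z ∈ spectrum ℂ (Ring.inverse (1 - x)), (1 / 2 : ℝ) ≤ z.re := by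
  intro z hz
  have hu : 1 - x = ((Units.oneSub x hx : Aˣ) : A) := rfl
  rw [hu, Ring.inverse_unit, ← spectrum.map_inv] at hz
  have hdisc : ‖1 - z⁻¹‖ < 1 :=
    (norm_one_sub_le_of_mem_spectrum_one_sub (Set.mem_inv.mp hz)).trans_lt hx
  simpa using (Complex.one_half_lt_re_inv_of_norm_one_sub_lt_one hdisc).le
end
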